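/- Let d ≥ 1, M ≥ 1, σ > 0, λ > 0, and let π be a finite Borel measure on ℝ^d with ∫‖x‖ dπ(x) < ∞. Then the function F_{M,λ} : (ℝ^d)^M → ℝ defined by F_{M,λ}(Y) = inf_{w ∈ ℝ^M} (1/2)(C_π − 2⟨w, v0(Y)⟩ + wᵀ K_λ(Y) w) is differentiable at every configuration Y = (y_1,…,y_M), and its gradient, viewed as the M×d matrix whose i-th row is the gradient with respect to y_i, equals σ^{-2} W*_λ(Y) ( K_λ(Y) W*_λ(Y) Y − v1(Y) ), where Y on the right-hand side denotes the M×d matrix with rows y_i and v1(Y) the M×d matrix with rows v1(y_i). -/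

import Mathlib

open MeasureTheory Matrix

noncomputable section

/-- Points in `ℝ^d` with the Euclidean norm. -/
abbrev Euc (d : ℕ) := EuclideanSpace ℝ (Fin d)

/-- The squared-exponential (Gaussian) kernel with bandwidth `σ`. -/
def ker {d : ℕ} (σ : ℝ) (x y : Euc d) : ℝ := Real.exp (-‖x - y‖ ^ 2 / (2 * σ ^ 2))

/-- Kernel mean embedding `v0(y) = ∫ κ(x,y) dπ(x)`. -/
def v0 {d : ℕ} (σ : ℝ) (π : Measure (Euc d)) (y : Euc d) : ℝ := ∫ x, ker σ x y ∂π

/-- Kernel embedding of the first moment `v1(y) = ∫ x κ(x,y) dπ(x)`. -/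
def v1 {d : ℕ} (σ : ℝ) (π : Measure (Euc d)) (y : Euc d) : Euc d := ∫ x, ker σ x y • x ∂π

/-- The constant `C_π = ∬ κ(x,x') dπ(x) dπ(x')`. -/
def Cpi {d : ℕ} (σ : ℝ) (π : Measure (Euc d)) : ℝ := ∫ x, ∫ x', ker σ x x' ∂π ∂π

/-- Regularized kernel matrix `K_λ(Y) = K(Y) + λ I`. -/
def Klam {d M : ℕ} (σ lam : ℝ) (Y : Fin M → Euc d) : Matrix (Fin M) (Fin M) ℝ :=
  Matrix.of (fun i j => ker σ (Y i) (Y j)) + lam • (1 : Matrix (Fin M) (Fin M) ℝ)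

/-- The vector `v0(Y) ∈ ℝ^M` with entries `v0(y_i)`. -/
def v0vec {d M : ℕ} (σ : ℝ) (π : Measure (Euc d)) (Y : Fin M → Euc d) : Fin M → ℝ :=
  fun i => v0 σ π (Y i)

/-- Regularized optimal weights `w*_λ(Y) = K_λ(Y)⁻¹ v0(Y)`. -/
def wstar {d M : ℕ} (σ lam : ℝ) (π : Measure (Euc d)) (Y : Fin M → Euc d) : Fin M → ℝ :=
  (Klam σ lam Y)⁻¹ *ᵥ v0vec σ π Y

/-- `F_{M,λ}(Y) = inf_w (1/2)(C_π − 2⟨w, v0(Y)⟩ + wᵀ K_λ(Y) w)`. -/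
def FM {d M : ℕ} (σ lam : ℝ) (π : Measure (Euc d)) (Y : Fin M → Euc d) : ℝ :=
  ⨅ w : Fin M → ℝ,
    (1 / 2) * (Cpi σ π - 2 * (w ⬝ᵥ v0vec σ π Y) + w ⬝ᵥ (Klam σ lam Y *ᵥ w))

/-- The configuration `Y` viewed as the `M×d` matrix with rows `y_i`. -/
def Ymat {d M : ℕ} (Y : Fin M → Euc d) : Matrix (Fin M) (Fin d) ℝ :=
  Matrix.of fun i j => Y i j

/-- The `M×d` matrix with rows `v1(y_i)`. -/
def v1mat {d M : ℕ} (σ : ℝ) (π : Measure (Euc d)) (Y : Fin M → Euc d) :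
    Matrix (Fin M) (Fin d) ℝ :=
  Matrix.of fun i j => v1 σ π (Y i) j

/-!
The Gaussian kernel matrix is a diagonal congruence of the entrywise exponential of a scaled Gram
matrix, and that exponential is a convergent series of Hadamard powers of a positive semidefinite
matrix, so by the Schur product theorem `K_λ(Y)` is positive definite. The quadratic in `w` is then
minimized at `w*_λ(Y)`, which depends differentiably on `Y` since matrix inversion does. By the
envelope theorem the derivative of `F_{M,λ}` is the partial derivative in `Y` of the quadratic at
the weights held at `w*_λ(Y)`; it involves only the derivatives of `v0` (differentiation under the
integral sign, dominated because `t e^{-t²/(2σ²)} ≤ σ`) and of the kernel entries. Symmetrizing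
the pairwise sum and using `K_λ(Y) w*_λ(Y) = v0(Y)` turns it into the stated matrix.
-/

open InnerProductSpace

theorem Matrix.PosSemidef.map_pow {ι : Type*} [Fintype ι] {A : Matrix ι ι ℝ}
    (hA : A.PosSemidef) (k : ℕ) : (A.map (· ^ k)).PosSemidef := by
  induction k with
  | zero =>
    have hone : A.map (· ^ 0) = vecMulVec 1 (star 1) := by
      ext i j
      simp [vecMulVec_apply]
    exact hone ▸ posSemidef_vecMulVec_self_star 1
  | succ k ih =>
    have hsucc : A.map (· ^ (k + 1)) = A.map (· ^ k) ⊙ A := by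
      ext i j
      simp [pow_succ]
    exact hsucc ▸ ih.hadamard hA

theorem Matrix.PosSemidef.map_exp {ι : Type*} [Fintype ι] {A : Matrix ι ι ℝ}
    (hA : A.PosSemidef) : (A.map Real.exp).PosSemidef := by
  refine posSemidef_iff_dotProduct_mulVec.2 ⟨?_, fun x => ?_⟩
  · ext i j
    simpa using congrArg Real.exp (hA.isHermitian.apply i j)
  have hexp (a : ℝ) : HasSum (fun k : ℕ => (k.factorial : ℝ)⁻¹ * a ^ k) (Real.exp a) := by
    simpa [Real.exp_eq_exp_ℝ, div_eq_inv_mul] using NormedSpace.expSeries_div_hasSum_exp a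
  have hsum : HasSum (fun k : ℕ => (k.factorial : ℝ)⁻¹ * (star x ⬝ᵥ (A.map (· ^ k) *ᵥ x)))
      (star x ⬝ᵥ (A.map Real.exp *ᵥ x)) := by
    simp only [dotProduct, mulVec, map_apply, Finset.mul_sum]
    refine hasSum_sum fun i _ => hasSum_sum fun j _ => ?_
    rw [show star x i * (Real.exp (A i j) * x j) = star x i * x j * Real.exp (A i j) by ring]
    exact ((hexp (A i j)).mul_left (star x i * x j)).congr_fun fun k => by ring
  exact hsum.nonneg fun k => mul_nonneg (by positivity) ((hA.map_pow k).dotProduct_mulVec_nonneg x)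

open scoped Norms.Operator in
theorem differentiableAt_matrix_inv_apply {𝕜 E n : Type*} [RCLike 𝕜]
    [NormedAddCommGroup E] [NormedSpace 𝕜 E]
    [Fintype n] [DecidableEq n] {f : E → Matrix n n 𝕜} {x : E}
    (hf : ∀ i j, DifferentiableAt 𝕜 (fun e => f e i j) x) (hx : IsUnit (f x).det) (i j : n) :
    DifferentiableAt 𝕜 (fun e => (f e)⁻¹ i j) x := by
  have hdiff : DifferentiableAt 𝕜 f x := by
    have hsum : f = fun e => ∑ k, ∑ l, f e k l • single k l (1 : 𝕜) := by
      funext e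
      exact (matrix_eq_sum_single (f e)).trans (by simp [smul_single])
    rw [hsum]
    fun_prop
  simp only [nonsing_inv_eq_ringInverse]
  exact (LinearMap.toContinuousLinearMap (entryLinearMap 𝕜 𝕜 i j)).differentiableAt.comp x
    (hdiff.inverse ((isUnit_iff_isUnit_det _).2 hx))

theorem Matrix.PosSemidef.isMinOn_quadratic {n : Type*} [Fintype n] {A : Matrix n n ℝ}
    (hA : A.PosSemidef) {b w₀ : n → ℝ} (hw₀ : A *ᵥ w₀ = b) (c : ℝ) :
    IsMinOn (fun w => (1 / 2) * (c - 2 * (w ⬝ᵥ b) + w ⬝ᵥ (A *ᵥ w))) Set.univ w₀ := by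
  intro w _
  have hsymm : w₀ ⬝ᵥ (A *ᵥ w) = w ⬝ᵥ b := by
    rw [dotProduct_mulVec, ← mulVec_transpose, dotProduct_comm,
      ← conjTranspose_eq_transpose_of_trivial, hA.isHermitian.eq, hw₀]
  have hq := hA.dotProduct_mulVec_nonneg (w - w₀)
  simp only [star_trivial, mulVec_sub, sub_dotProduct, dotProduct_sub, hsymm, hw₀] at hq
  simp only [Set.mem_ofPred_eq, hw₀]
  linarith

theorem IsLocalMin.hasFDerivAt_envelope {W E : Type*} [NormedAddCommGroup W] [NormedSpace ℝ W]
    [NormedAddCommGroup E] [NormedSpace ℝ E] {Φ : W → E → ℝ} {g : E → W} {x : E}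
    (hΦ : DifferentiableAt ℝ (fun p : W × E => Φ p.1 p.2) (g x, x))
    (hg : DifferentiableAt ℝ g x) (hmin : IsLocalMin (fun w => Φ w x) (g x)) :
    HasFDerivAt (fun y => Φ (g y) y) (fderiv ℝ (Φ (g x)) x) x := by
  set L := fderiv ℝ (fun p : W × E => Φ p.1 p.2) (g x, x)
  have hL : HasFDerivAt (fun p : W × E => Φ p.1 p.2) L (g x, x) := hΦ.hasFDerivAt
  have hfst : L.comp (ContinuousLinearMap.inl ℝ W E) = 0 :=
    hmin.hasFDerivAt_eq_zero (hL.comp (g x) (f := (·, x)) (hasFDerivAt_prodMk_left _ _))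
  have hsnd : fderiv ℝ (Φ (g x)) x = L.comp (ContinuousLinearMap.inr ℝ W E) :=
    (hL.comp x (f := (g x, ·)) (hasFDerivAt_prodMk_right _ _)).fderiv
  refine (hL.comp x (f := fun y => (g y, y))
    (hg.hasFDerivAt.prodMk (hasFDerivAt_id x))).congr_fderiv ?_
  ext v
  have hsplit : (fderiv ℝ g x v, v) = (fderiv ℝ g x v, 0) + (0, v) := by simp
  have h0 := congrArg (fun T : W →L[ℝ] ℝ => T (fderiv ℝ g x v)) hfst
  simp only [ContinuousLinearMap.comp_apply, ContinuousLinearMap.prod_apply,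
    ContinuousLinearMap.coe_id', id_eq, hsnd, hsplit, map_add]
  simpa using h0

theorem half_sum_sum_mul_inner_sub_sub {ι E : Type*} [Fintype ι] [NormedAddCommGroup E]
    [InnerProductSpace ℝ E] {K : Matrix ι ι ℝ} (hK : K.IsSymm) (w : ι → ℝ) (y V : ι → E) :
    (1 / 2) * ∑ i, ∑ j, w i * w j * K i j * ⟪y i - y j, V i - V j⟫_ℝ =
      ∑ i, w i * ⟪(K *ᵥ w) i • y i - ∑ j, (K i j * w j) • y j, V i⟫_ℝ := by
  have hswap : ∑ i, ∑ j, w i * w j * K i j * ⟪y i - y j, V j⟫_ℝ =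
      -∑ i, ∑ j, w i * w j * K i j * ⟪y i - y j, V i⟫_ℝ := by
    rw [Finset.sum_comm]
    simp only [← Finset.sum_neg_distrib]
    refine Finset.sum_congr rfl fun i _ => Finset.sum_congr rfl fun j _ => ?_
    rw [hK.apply i j, ← neg_sub (y j), inner_neg_left]
    ring
  have hrow (i : ι) : ∑ j, w i * w j * K i j * ⟪y i - y j, V i⟫_ℝ =
      w i * ⟪(K *ᵥ w) i • y i - ∑ j, (K i j * w j) • y j, V i⟫_ℝ := by
    rw [mulVec, dotProduct, Finset.sum_smul, ← Finset.sum_sub_distrib, sum_inner,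
      Finset.mul_sum]
    refine Finset.sum_congr rfl fun j _ => ?_
    rw [← smul_sub, real_inner_smul_left]
    ring
  simp only [inner_sub_right, mul_sub, Finset.sum_sub_distrib, hswap, hrow]
  ring

section GaussianKernel

variable {d M : ℕ} {σ lam : ℝ} {π : Measure (Euc d)}

theorem ker_symm (σ : ℝ) (x y : Euc d) : ker σ x y = ker σ y x := by
  simp [ker, norm_sub_rev]

theorem ker_pos (σ : ℝ) (x y : Euc d) : 0 < ker σ x y := Real.exp_pos _

theorem ker_le_one (σ : ℝ) (x y : Euc d) : ker σ x y ≤ 1 :=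
  Real.exp_le_one_iff.2 (by rw [neg_div]; exact neg_nonpos.2 (by positivity))

theorem ker_mul_norm_sub_le (hσ : 0 < σ) (x y : Euc d) : ker σ x y * ‖x - y‖ ≤ σ := by
  obtain ⟨s, hs_def⟩ : ∃ s, s = ‖x - y‖ / σ := ⟨_, rfl⟩
  have hs : s ≤ Real.exp (s ^ 2 / 2) := by
    nlinarith [Real.add_one_le_exp (s ^ 2 / 2), sq_nonneg (s - 1)]
  have hker : ker σ x y = (Real.exp (s ^ 2 / 2))⁻¹ := by
    rw [ker, ← Real.exp_neg, hs_def]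
    congr 1
    field_simp
  have hnorm : ‖x - y‖ = σ * s := by
    rw [hs_def]
    field_simp
  rw [hker, hnorm, inv_mul_le_iff₀ (Real.exp_pos _)]
  nlinarith

theorem ker_eq_mul_exp_inner (σ : ℝ) (x y : Euc d) :
    ker σ x y = Real.exp (-‖x‖ ^ 2 / (2 * σ ^ 2)) *
      Real.exp ((σ ^ 2)⁻¹ * ⟪x, y⟫_ℝ) * Real.exp (-‖y‖ ^ 2 / (2 * σ ^ 2)) := by
  rw [ker, ← Real.exp_add, ← Real.exp_add, norm_sub_sq_real]
  congr 1
  ring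

theorem posSemidef_ker_matrix {ι : Type*} [Fintype ι] [DecidableEq ι] (σ : ℝ) (Y : ι → Euc d) :
    (of fun i j => ker σ (Y i) (Y j)).PosSemidef := by
  set D := diagonal fun i => Real.exp (-‖Y i‖ ^ 2 / (2 * σ ^ 2))
  have hexp := ((posSemidef_gram ℝ Y).smul (inv_nonneg.2 (sq_nonneg σ))).map_exp
  have hfactor : (of fun i j => ker σ (Y i) (Y j)) =
      D * ((σ ^ 2)⁻¹ • gram ℝ Y).map Real.exp * Dᴴ := by
    ext i j
    simp [D, gram_apply, ker_eq_mul_exp_inner]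
  exact hfactor ▸ hexp.mul_mul_conjTranspose_same D

theorem posDef_Klam (hlam : 0 < lam) (Y : Fin M → Euc d) : (Klam σ lam Y).PosDef :=
  PosDef.posSemidef_add (posSemidef_ker_matrix σ Y) (PosDef.one.smul hlam)

theorem Klam_isSymm (σ lam : ℝ) (Y : Fin M → Euc d) : (Klam σ lam Y).IsSymm :=
  IsSymm.ext fun i j => by simp [Klam, ker_symm, one_apply, eq_comm]

theorem Klam_apply_of_ne {Y : Fin M → Euc d} {i j : Fin M} (h : i ≠ j) :
    Klam σ lam Y i j = ker σ (Y i) (Y j) := by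
  simp [Klam, one_apply_ne h]

theorem Klam_mulVec_wstar (hlam : 0 < lam) (Y : Fin M → Euc d) :
    Klam σ lam Y *ᵥ wstar σ lam π Y = v0vec σ π Y := by
  rw [wstar, mulVec_mulVec,
    mul_nonsing_inv _ ((isUnit_iff_isUnit_det _).1 (posDef_Klam hlam Y).isUnit), one_mulVec]

theorem HasFDerivAt.ker {E : Type*} [NormedAddCommGroup E] [NormedSpace ℝ E]
    {f g : E → Euc d} {f' g' : E →L[ℝ] Euc d} {e : E}
    (hf : HasFDerivAt f f' e) (hg : HasFDerivAt g g' e) :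
    HasFDerivAt (fun e => ker σ (f e) (g e))
      ((-(σ ^ 2)⁻¹ * ker σ (f e) (g e)) • (innerSL ℝ (f e - g e)).comp (f' - g')) e := by
  have hker (x y : Euc d) : _root_.ker σ x y = Real.exp (-(2 * σ ^ 2)⁻¹ * ‖x - y‖ ^ 2) := by
    rw [_root_.ker]
    ring_nf
  simp only [hker]
  refine ((hf.fun_sub hg).norm_sq.const_mul _).exp.congr_fderiv ?_
  ext v
  simp only [_root_.smul_apply, ContinuousLinearMap.comp_apply, smul_eq_mul, nsmul_eq_mul]
  push_cast
  ring

theorem hasFDerivAt_ker_right (x y : Euc d) :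
    HasFDerivAt (ker σ x) ((σ ^ 2)⁻¹ • innerSL ℝ (ker σ x y • (x - y))) y := by
  refine ((hasFDerivAt_const x y).ker (σ := σ) (hasFDerivAt_id y)).congr_fderiv ?_
  ext v
  simp only [id_eq, neg_mul, map_sub, zero_sub, ContinuousLinearMap.comp_neg,
    ContinuousLinearMap.comp_id, neg_sub, neg_smul, _root_.neg_apply, _root_.smul_apply,
    _root_.sub_apply, coe_innerSL_apply, smul_eq_mul, map_smul]
  ring

theorem hasFDerivAt_Klam_apply (Y : Fin M → Euc d) (i j : Fin M) :
    HasFDerivAt (fun Z : Fin M → Euc d => Klam σ lam Z i j)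
      ((-(σ ^ 2)⁻¹ * Klam σ lam Y i j) • (innerSL ℝ (Y i - Y j)).comp
        (ContinuousLinearMap.proj (R := ℝ) (φ := fun _ => Euc d) i - ContinuousLinearMap.proj j))
      Y := by
  refine (((hasFDerivAt_apply i Y).ker (σ := σ) (hasFDerivAt_apply j Y)).add_const
    (lam * (1 : Matrix (Fin M) (Fin M) ℝ) i j)).congr_fderiv ?_
  rcases eq_or_ne i j with rfl | hij
  · simp
  · rw [Klam_apply_of_ne hij]

theorem differentiable_Klam_apply (σ lam : ℝ) (i j : Fin M) :
    Differentiable ℝ fun Z : Fin M → Euc d => Klam σ lam Z i j :=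
  fun Y => (hasFDerivAt_Klam_apply Y i j).differentiableAt

end GaussianKernel

section MeanEmbedding

variable {d M : ℕ} {σ lam : ℝ} {π : Measure (Euc d)}

theorem continuous_ker_left (σ : ℝ) (y : Euc d) : Continuous fun x : Euc d => ker σ x y := by
  unfold ker
  fun_prop

theorem integrable_ker_left [IsFiniteMeasure π] (σ : ℝ) (y : Euc d) :
    Integrable (fun x => ker σ x y) π :=
  (integrable_const 1).mono' (continuous_ker_left σ y).aestronglyMeasurable
    (ae_of_all _ fun x => by
      rw [Real.norm_of_nonneg (ker_pos σ x y).le]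
      exact ker_le_one σ x y)

theorem integrable_ker_smul (hπ : Integrable (fun x => ‖x‖) π) (σ : ℝ) (y : Euc d) :
    Integrable (fun x => ker σ x y • x) π :=
  hπ.mono' ((continuous_ker_left σ y).smul continuous_id).aestronglyMeasurable
    (ae_of_all _ fun x => by
      rw [norm_smul, Real.norm_of_nonneg (ker_pos σ x y).le]
      exact mul_le_of_le_one_left (norm_nonneg x) (ker_le_one σ x y))

theorem norm_smul_innerSL_ker_smul_sub_le (hσ : 0 < σ) (x y : Euc d) :
    ‖(σ ^ 2)⁻¹ • innerSL ℝ (ker σ x y • (x - y))‖ ≤ (σ ^ 2)⁻¹ * σ := by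
  rw [norm_smul, innerSL_apply_norm, norm_smul, Real.norm_of_nonneg (ker_pos σ x y).le,
    Real.norm_of_nonneg (by positivity)]
  exact mul_le_mul_of_nonneg_left (ker_mul_norm_sub_le hσ x y) (by positivity)

variable [IsFiniteMeasure π]

theorem hasFDerivAt_v0 (hσ : 0 < σ) (hπ : Integrable (fun x => ‖x‖) π) (y : Euc d) :
    HasFDerivAt (v0 σ π) ((σ ^ 2)⁻¹ • innerSL ℝ (v1 σ π y - v0 σ π y • y)) y := by
  have hcont (z : Euc d) :
      Continuous fun x => (σ ^ 2)⁻¹ • innerSL ℝ (ker σ x z • (x - z)) := by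
    have := continuous_ker_left σ z
    fun_prop
  have h := hasFDerivAt_integral_of_dominated_of_fderiv_le (μ := π) (s := Set.univ)
    (F := fun z x => ker σ x z) (bound := fun _ => (σ ^ 2)⁻¹ * σ) Filter.univ_mem
    (Filter.Eventually.of_forall fun z => (continuous_ker_left σ z).aestronglyMeasurable)
    (integrable_ker_left σ y) (hcont y).aestronglyMeasurable
    (ae_of_all _ fun x z _ => norm_smul_innerSL_ker_smul_sub_le hσ x z) (integrable_const _)
    (ae_of_all _ fun x z _ => hasFDerivAt_ker_right x z)
  have hint : Integrable (fun x => ker σ x y • (x - y)) π :=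
    ((integrable_ker_smul hπ σ y).sub ((integrable_ker_left σ y).smul_const y)).congr
      (ae_of_all _ fun x => (smul_sub _ _ _).symm)
  have hval : ∫ x, ker σ x y • (x - y) ∂π = v1 σ π y - v0 σ π y • y := by
    simp only [smul_sub]
    rw [integral_sub (integrable_ker_smul hπ σ y) ((integrable_ker_left σ y).smul_const y),
      integral_smul_const]
    rfl
  rwa [integral_smul, (innerSL ℝ).integral_comp_comm hint, hval] at h

theorem differentiable_v0 (hσ : 0 < σ) (hπ : Integrable (fun x => ‖x‖) π) :
    Differentiable ℝ (v0 σ π) :=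
  fun y => (hasFDerivAt_v0 hσ hπ y).differentiableAt

theorem differentiableAt_wstar (hσ : 0 < σ) (hlam : 0 < lam) (hπ : Integrable (fun x => ‖x‖) π)
    (Y : Fin M → Euc d) : DifferentiableAt ℝ (wstar σ lam π) Y := by
  have hinv := differentiableAt_matrix_inv_apply
    (fun i j => (differentiable_Klam_apply σ lam i j).differentiableAt)
    ((isUnit_iff_isUnit_det _).1 (posDef_Klam hlam Y).isUnit)
  have hv0 := differentiable_v0 hσ hπ
  refine differentiableAt_pi.2 fun i => ?_
  simp only [wstar, mulVec, dotProduct, v0vec]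
  exact DifferentiableAt.fun_sum fun j _ =>
    (hinv i j).mul ((hv0 _).comp Y (differentiableAt_apply j Y))

end MeanEmbedding

section Objective

variable {d M : ℕ} {σ lam : ℝ} {π : Measure (Euc d)}

def fmObjective (σ lam : ℝ) (π : Measure (Euc d)) (w : Fin M → ℝ) (Y : Fin M → Euc d) : ℝ :=
  (1 / 2) * (Cpi σ π - 2 * (w ⬝ᵥ v0vec σ π Y) + w ⬝ᵥ (Klam σ lam Y *ᵥ w))

theorem isMinOn_fmObjective_wstar (hlam : 0 < lam) (Y : Fin M → Euc d) :
    IsMinOn (fmObjective σ lam π · Y) Set.univ (wstar σ lam π Y) :=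
  (posDef_Klam hlam Y).posSemidef.isMinOn_quadratic (Klam_mulVec_wstar hlam Y) _

theorem FM_eq_fmObjective_wstar (hlam : 0 < lam) (Y : Fin M → Euc d) :
    FM σ lam π Y = fmObjective σ lam π (wstar σ lam π Y) Y :=
  have hmin := isMinOn_fmObjective_wstar (π := π) hlam Y
  le_antisymm (ciInf_le ⟨_, Set.forall_mem_range.2 fun w => hmin (Set.mem_univ w)⟩ _)
    (le_ciInf fun w => hmin (Set.mem_univ w))

theorem sum_gradient_matrix_mul_eq (K : Matrix (Fin M) (Fin M) ℝ) (w : Fin M → ℝ)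
    (Y V : Fin M → Euc d) :
    ∑ i, ∑ t, ((σ ^ 2)⁻¹ • (diagonal w * (K * diagonal w * Ymat Y - v1mat σ π Y))) i t * V i t =
      (σ ^ 2)⁻¹ * ∑ i, w i * ⟪∑ j, (K i j * w j) • Y j - v1 σ π (Y i), V i⟫_ℝ := by
  rw [Finset.mul_sum]
  refine Finset.sum_congr rfl fun i _ => ?_
  simp only [PiLp.inner_apply, Finset.mul_sum]
  refine Finset.sum_congr rfl fun t _ => ?_
  rw [Matrix.smul_apply, diagonal_mul, Matrix.sub_apply, mul_apply]
  simp only [mul_diagonal, Ymat, of_apply, v1mat, smul_eq_mul, PiLp.sub_apply, WithLp.ofLp_sum,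
    WithLp.ofLp_smul, Finset.sum_apply, Pi.smul_apply, RCLike.inner_apply, Real.ringHom_apply]
  ring

variable [IsFiniteMeasure π]

theorem differentiable_fmObjective (hσ : 0 < σ) (hπ : Integrable (fun x => ‖x‖) π) :
    Differentiable ℝ fun p : (Fin M → ℝ) × (Fin M → Euc d) => fmObjective σ lam π p.1 p.2 := by
  have hK := differentiable_Klam_apply (d := d) (M := M) σ lam
  have hv0 := differentiable_v0 hσ hπ
  simp only [fmObjective, mulVec, dotProduct, v0vec]
  fun_prop

theorem fderiv_fmObjective_apply (hσ : 0 < σ) (hπ : Integrable (fun x => ‖x‖) π)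
    (w : Fin M → ℝ) (Y V : Fin M → Euc d) :
    fderiv ℝ (fmObjective σ lam π w) Y V =
      -(σ ^ 2)⁻¹ * (∑ i, w i * ⟪v1 σ π (Y i) - v0 σ π (Y i) • Y i, V i⟫_ℝ +
        (1 / 2) * ∑ i, ∑ j, w i * w j * Klam σ lam Y i j * ⟪Y i - Y j, V i - V j⟫_ℝ) := by
  have hv0 (i : Fin M) := (hasFDerivAt_v0 hσ hπ (Y i)).comp Y
    (f := fun Z : Fin M → Euc d => Z i) (hasFDerivAt_apply i Y)
  have h := (((hasFDerivAt_const (Cpi σ π) Y).sub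
    ((HasFDerivAt.fun_sum (u := Finset.univ) fun i _ => (hv0 i).const_mul (w i)).const_mul 2)).add
    (HasFDerivAt.fun_sum (u := Finset.univ) fun i _ => (HasFDerivAt.fun_sum (u := Finset.univ)
      fun j _ => (hasFDerivAt_Klam_apply (σ := σ) (lam := lam) Y i j).mul_const (w j)).const_mul
        (w i))).const_mul (1 / 2 : ℝ)
  rw [HasFDerivAt.fderiv (f := fmObjective σ lam π w) h]
  simp only [_root_.add_apply, _root_.sub_apply, _root_.smul_apply, FunLike.coe_sum,
    Finset.sum_apply, ContinuousLinearMap.comp_apply, ContinuousLinearMap.proj_apply,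
    _root_.zero_apply, innerSL_apply_apply, smul_eq_mul]
  simp only [mul_add, Finset.mul_sum, zero_sub, mul_neg, neg_mul]
  ring_nf
  rw [Finset.sum_neg_distrib]
  ring_nf

theorem fderiv_fmObjective_wstar_apply (hσ : 0 < σ) (hlam : 0 < lam)
    (hπ : Integrable (fun x => ‖x‖) π) (Y V : Fin M → Euc d) :
    fderiv ℝ (fmObjective σ lam π (wstar σ lam π Y)) Y V =
      ∑ i, ∑ t, ((σ ^ 2)⁻¹ • (diagonal (wstar σ lam π Y) *
        (Klam σ lam Y * diagonal (wstar σ lam π Y) * Ymat Y - v1mat σ π Y))) i t * V i t := by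
  set w := wstar σ lam π Y
  have hcancel (i : Fin M) : v1 σ π (Y i) - v0 σ π (Y i) • Y i +
      (v0 σ π (Y i) • Y i - ∑ j, (Klam σ lam Y i j * w j) • Y j) =
        -(∑ j, (Klam σ lam Y i j * w j) • Y j - v1 σ π (Y i)) := by
    abel
  rw [fderiv_fmObjective_apply hσ hπ, half_sum_sum_mul_inner_sub_sub (Klam_isSymm σ lam Y),
    Klam_mulVec_wstar hlam, sum_gradient_matrix_mul_eq, ← Finset.sum_add_distrib]
  simp only [v0vec, ← mul_add, ← inner_add_left, hcancel, inner_neg_left, mul_neg,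
    Finset.sum_neg_distrib, neg_mul, neg_neg]

end Objective

theorem fm_differentiable_gradient_general
    (d M : ℕ) (σ lam : ℝ) (hσ : 0 < σ) (hlam : 0 < lam)
    (π : Measure (Euc d)) [IsFiniteMeasure π] (hπ : Integrable (fun x => ‖x‖) π)
    (Y : Fin M → Euc d) :
    DifferentiableAt ℝ (fun Z : Fin M → Euc d => FM σ lam π Z) Y ∧
    ∀ V : Fin M → Euc d,
      fderiv ℝ (fun Z : Fin M → Euc d => FM σ lam π Z) Y V =
        ∑ i, ∑ j,
          ((σ ^ 2)⁻¹ •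
            (Matrix.diagonal (wstar σ lam π Y) *
              (Klam σ lam Y * Matrix.diagonal (wstar σ lam π Y) * Ymat Y -
                v1mat σ π Y))) i j * (V i) j := by
  have hFM : (fun Z : Fin M → Euc d => FM σ lam π Z) =
      fun Z => fmObjective σ lam π (wstar σ lam π Z) Z :=
    funext (FM_eq_fmObjective_wstar hlam)
  have hD : HasFDerivAt (fun Z : Fin M → Euc d => FM σ lam π Z)
      (fderiv ℝ (fmObjective σ lam π (wstar σ lam π Y)) Y) Y :=
    hFM ▸ IsLocalMin.hasFDerivAt_envelope (differentiable_fmObjective hσ hπ _)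
      (differentiableAt_wstar hσ hlam hπ Y)
      ((isMinOn_fmObjective_wstar hlam Y).isLocalMin Filter.univ_mem)
  exact ⟨hD.differentiableAt, fun V => by
    rw [hD.fderiv, fderiv_fmObjective_wstar_apply hσ hlam hπ]⟩

/-- `F_{M,λ}` is differentiable at every configuration `Y`, with gradient
(as the `M×d` matrix of partial gradients w.r.t. each `y_i`) equal to
`σ⁻² W*_λ(Y) (K_λ(Y) W*_λ(Y) Y − v1(Y))`. -/
theorem fm_differentiable_gradient
    (d M : ℕ) (hd : 1 ≤ d) (hM : 1 ≤ M) (σ lam : ℝ) (hσ : 0 < σ) (hlam : 0 < lam)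
    (π : Measure (Euc d)) [IsFiniteMeasure π] (hπ : Integrable (fun x => ‖x‖) π)
    (Y : Fin M → Euc d) :
    DifferentiableAt ℝ (fun Z : Fin M → Euc d => FM σ lam π Z) Y ∧
    ∀ V : Fin M → Euc d,
      fderiv ℝ (fun Z : Fin M → Euc d => FM σ lam π Z) Y V =
        ∑ i, ∑ j,
          ((σ ^ 2)⁻¹ •
            (Matrix.diagonal (wstar σ lam π Y) *
              (Klam σ lam Y * Matrix.diagonal (wstar σ lam π Y) * Ymat Y -
                v1mat σ π Y))) i j * (V i) j :=
  fm_differentiable_gradient_general d M σ lam hσ hlam π hπ Y
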